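/- arXiv:1011.6065 — 7 statements merged into one kernel-verified Lean document; each statement's English description precedes it below -/
import Mathlib

section
/- If X has E[X] = 0 and E[X²] = 1, and 0 < b ≤ a with (a-b)b/2 ≤ 1 ≤ ab, then P(X ∉ (-a, b)) ≤ (4 + (a-b)²)/(a+b)². -/
/-!
Shifting by the midpoint of the interval, `X ∉ (-a, b)` means `|2X + (a - b)| ≥ a + b`, so Markov's
inequality applied to `(2X + (a - b))²` bounds the probability by
`E[(2X + (a - b))²] / (a + b)² = (4 + (a - b)²) / (a + b)²`.
-/

open MeasureTheory ProbabilityTheory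
open scoped ProbabilityTheory

lemma sq_add_le_sq_two_mul_add_sub_of_notMem_Ioo {a b x : ℝ} (hab : 0 ≤ a + b)
    (hx : x ∉ Set.Ioo (-a) b) : (a + b) ^ 2 ≤ (2 * x + (a - b)) ^ 2 := by
  rw [Set.mem_Ioo, not_and_or, not_lt, not_lt] at hx
  rcases hx with hx | hx <;> nlinarith

lemma measure_le_ofReal_integral_div {Ω : Type*} [MeasurableSpace Ω] {μ : Measure Ω}
    [IsFiniteMeasure μ] {f : Ω → ℝ} (hf_nonneg : 0 ≤ᵐ[μ] f) (hf : Integrable f μ)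
    {ε : ℝ} (hε : 0 < ε) {s : Set Ω} (hs : ∀ ω ∈ s, ε ≤ f ω) :
    μ s ≤ ENNReal.ofReal ((∫ ω, f ω ∂μ) / ε) := by
  have markov : ε * μ.real {ω | ε ≤ f ω} ≤ ∫ ω, f ω ∂μ :=
    mul_meas_ge_le_integral_of_nonneg hf_nonneg hf ε
  calc μ s ≤ μ {ω | ε ≤ f ω} := measure_mono hs
    _ = ENNReal.ofReal (μ.real {ω | ε ≤ f ω}) := (ofReal_measureReal).symm
    _ ≤ ENNReal.ofReal ((∫ ω, f ω ∂μ) / ε) :=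
        ENNReal.ofReal_le_ofReal ((le_div_iff₀' hε).mpr markov)

lemma integrable_two_mul_add_sq {Ω : Type*} [MeasurableSpace Ω] {μ : Measure Ω}
    [IsFiniteMeasure μ] {X : Ω → ℝ} (hX : Integrable X μ)
    (hX2 : Integrable (fun ω => X ω ^ 2) μ) (c : ℝ) :
    Integrable (fun ω => (2 * X ω + c) ^ 2) μ := by
  refine ((hX2.const_mul 4).add ((hX.const_mul (4 * c)).add (integrable_const (c ^ 2)))).congr
    (Filter.Eventually.of_forall fun ω => ?_)
  simp only [Pi.add_apply]
  ring

lemma integral_two_mul_add_sq {Ω : Type*} [MeasurableSpace Ω] {μ : Measure Ω}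
    [IsProbabilityMeasure μ] {X : Ω → ℝ} (hX : Integrable X μ)
    (hX2 : Integrable (fun ω => X ω ^ 2) μ) (c : ℝ) :
    ∫ ω, (2 * X ω + c) ^ 2 ∂μ = 4 * ∫ ω, X ω ^ 2 ∂μ + 4 * c * ∫ ω, X ω ∂μ + c ^ 2 := by
  have expand : (fun ω => (2 * X ω + c) ^ 2)
      = fun ω => 4 * X ω ^ 2 + 4 * c * X ω + c ^ 2 := by
    ext ω; ring
  have hlin : Integrable (fun ω => 4 * X ω ^ 2 + 4 * c * X ω) μ :=
    (hX2.const_mul 4).add (hX.const_mul _)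
  rw [expand, integral_add hlin (integrable_const _),
    integral_add (hX2.const_mul 4) (hX.const_mul _), integral_const_mul, integral_const_mul,
    integral_const, probReal_univ, one_smul]

theorem case_two_general (Ω : Type*) [MeasureSpace Ω]
    (hP : IsProbabilityMeasure (ℙ : Measure Ω))
    (X : Ω → ℝ)
    (hint1 : Integrable X) (hint2 : Integrable (fun ω => X ω ^ 2))
    (hmean : ∫ ω, X ω = 0) (hvar : ∫ ω, X ω ^ 2 = 1)
    (a b : ℝ) (hb : 0 < b) (hba : b ≤ a) :
    ℙ {ω | X ω ∉ Set.Ioo (-a) b} ≤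
      ENNReal.ofReal ((4 + (a - b) ^ 2) / (a + b) ^ 2) := by
  have hab : 0 < a + b := by linarith
  have hmoment : ∫ ω, (2 * X ω + (a - b)) ^ 2 = 4 + (a - b) ^ 2 := by
    rw [integral_two_mul_add_sq hint1 hint2, hmean, hvar]
    ring
  rw [← hmoment]
  exact measure_le_ofReal_integral_div (Filter.Eventually.of_forall fun ω => sq_nonneg _)
    (integrable_two_mul_add_sq hint1 hint2 _) (by positivity)
    fun ω hω => sq_add_le_sq_two_mul_add_sub_of_notMem_Ioo hab.le hω

theorem case_two (Ω : Type*) [MeasureSpace Ω]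
    (hP : IsProbabilityMeasure (ℙ : Measure Ω))
    (X : Ω → ℝ) (hX : Measurable X)
    (hint1 : Integrable X) (hint2 : Integrable (fun ω => X ω ^ 2))
    (hmean : ∫ ω, X ω = 0) (hvar : ∫ ω, X ω ^ 2 = 1)
    (a b : ℝ) (hb : 0 < b) (hba : b ≤ a)
    (h1 : (a - b) * b / 2 ≤ 1) (h2 : 1 ≤ a * b) :
    ℙ {ω | X ω ∉ Set.Ioo (-a) b} ≤
      ENNReal.ofReal ((4 + (a - b) ^ 2) / (a + b) ^ 2) :=
  case_two_general Ω hP X hint1 hint2 hmean hvar a b hb hba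
end

section
/- If X has E[X] = 0 and E[X²] = 1, and 0 < b ≤ a with (a-b)b/2 ≥ 1, then P(X ∉ (-a, b)) ≤ 1/(1+b²). -/
open MeasureTheory ProbabilityTheory
open scoped ProbabilityTheory

/-!
Shift the mean to `-1/b` and apply Markov's inequality to `(X + 1/b)²`, as in Cantelli's
inequality. Since `(a - b) b ≥ 2` gives `a ≥ b + 2/b`, both `X ≤ -a` and `X ≥ b` force
`|X + 1/b| ≥ b + 1/b`, while `E[(X + 1/b)²] = 1 + 1/b²`; the quotient
`(1 + 1/b²) / (b + 1/b)²` is exactly `1 / (1 + b²)`.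
-/

theorem add_const_sq_eq {Ω : Type*} (X : Ω → ℝ) (u : ℝ) :
    (fun ω => (X ω + u) ^ 2) = fun ω => X ω ^ 2 + 2 * u * X ω + u ^ 2 := by
  funext ω
  ring

section

variable {Ω : Type*} [MeasurableSpace Ω] {μ : Measure Ω}

theorem meas_abs_ge_le_integral_sq_div_sq [IsFiniteMeasure μ] {Y : Ω → ℝ}
    (hY : Integrable (fun ω => Y ω ^ 2) μ) {c : ℝ} (hc : 0 < c) :
    μ {ω | c ≤ |Y ω|} ≤ ENNReal.ofReal ((∫ ω, Y ω ^ 2 ∂μ) / c ^ 2) := by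
  have hset : {ω | c ≤ |Y ω|} = {ω | c ^ 2 ≤ Y ω ^ 2} := by
    ext ω
    simp only [Set.mem_ofPred_eq, ← sq_abs (Y ω)]
    exact (pow_le_pow_iff_left₀ hc.le (abs_nonneg _) two_ne_zero).symm
  have markov := mul_meas_ge_le_integral_of_nonneg
    (Filter.Eventually.of_forall fun ω => sq_nonneg (Y ω)) hY (c ^ 2)
  rw [hset, ← ofReal_measureReal]
  exact ENNReal.ofReal_le_ofReal ((le_div_iff₀' (by positivity)).2 markov)

theorem integrable_add_const_sq [IsFiniteMeasure μ] {X : Ω → ℝ} (hX : Integrable X μ)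
    (hX2 : Integrable (fun ω => X ω ^ 2) μ) (u : ℝ) :
    Integrable (fun ω => (X ω + u) ^ 2) μ := by
  rw [add_const_sq_eq]
  exact (hX2.add (hX.const_mul _)).add (integrable_const _)

theorem integral_add_const_sq [IsProbabilityMeasure μ] {X : Ω → ℝ} (hX : Integrable X μ)
    (hX2 : Integrable (fun ω => X ω ^ 2) μ) (u : ℝ) :
    ∫ ω, (X ω + u) ^ 2 ∂μ = ∫ ω, X ω ^ 2 ∂μ + 2 * u * ∫ ω, X ω ∂μ + u ^ 2 := by
  have hquad : Integrable (fun ω => X ω ^ 2 + 2 * u * X ω) μ := hX2.add (hX.const_mul _)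
  rw [add_const_sq_eq, integral_add hquad (integrable_const _),
    integral_add hX2 (hX.const_mul _), integral_const_mul, integral_const]
  simp

end

theorem le_abs_add_inv_of_notMem_Ioo {a b x : ℝ} (hb : 0 < b) (ha : b + 2 / b ≤ a)
    (hx : x ∉ Set.Ioo (-a) b) : b + 1 / b ≤ |x + 1 / b| := by
  have hinv : 0 < 1 / b := by positivity
  rw [Set.mem_Ioo, not_and_or, not_lt, not_lt] at hx
  rcases hx with hx | hx
  · have hsplit : 2 / b = 1 / b + 1 / b := by ring
    rw [abs_of_neg (by linarith)]
    linarith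
  · rw [abs_of_pos (by linarith)]
    linarith

theorem case_three_general (Ω : Type*) [MeasureSpace Ω]
    (hP : IsProbabilityMeasure (ℙ : Measure Ω))
    (X : Ω → ℝ)
    (hint1 : Integrable X) (hint2 : Integrable (fun ω => X ω ^ 2))
    (hmean : ∫ ω, X ω = 0) (hvar : ∫ ω, X ω ^ 2 = 1)
    (a b : ℝ) (hb : 0 < b) (h1 : 1 ≤ (a - b) * b / 2) :
    ℙ {ω | X ω ∉ Set.Ioo (-a) b} ≤ ENNReal.ofReal (1 / (1 + b ^ 2)) := by
  have ha : b + 2 / b ≤ a := by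
    have hgap : 2 / b ≤ a - b := by rw [div_le_iff₀ hb]; linarith
    linarith
  calc ℙ {ω | X ω ∉ Set.Ioo (-a) b} ≤ ℙ {ω | b + 1 / b ≤ |X ω + 1 / b|} :=
        measure_mono fun ω => le_abs_add_inv_of_notMem_Ioo hb ha
    _ ≤ ENNReal.ofReal ((∫ ω, (X ω + 1 / b) ^ 2) / (b + 1 / b) ^ 2) :=
        meas_abs_ge_le_integral_sq_div_sq (integrable_add_const_sq hint1 hint2 _) (by positivity)
    _ = ENNReal.ofReal (1 / (1 + b ^ 2)) := by
        rw [integral_add_const_sq hint1 hint2, hmean, hvar]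
        congr 1
        field_simp
        ring

theorem case_three (Ω : Type*) [MeasureSpace Ω]
    (hP : IsProbabilityMeasure (ℙ : Measure Ω))
    (X : Ω → ℝ) (hX : Measurable X)
    (hint1 : Integrable X) (hint2 : Integrable (fun ω => X ω ^ 2))
    (hmean : ∫ ω, X ω = 0) (hvar : ∫ ω, X ω ^ 2 = 1)
    (a b : ℝ) (hb : 0 < b) (hba : b ≤ a) (h1 : 1 ≤ (a - b) * b / 2) :
    ℙ {ω | X ω ∉ Set.Ioo (-a) b} ≤ ENNReal.ofReal (1 / (1 + b ^ 2)) :=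
  case_three_general Ω hP X hint1 hint2 hmean hvar a b hb h1
end

section
/- If X has E[X] = 0 and E[X²] = 1, and 0 < b ≤ a, then P(X ∉ (-a, b)) ≤ min(1, (4 + (a-b)²)/(a+b)²). -/
open MeasureTheory ProbabilityTheory
open scoped ProbabilityTheory

/-!
The interval `(-a, b)` is the ball of radius `r = (a + b) / 2` about `m = (b - a) / 2`, so `X` lies
outside it exactly when `r ^ 2 ≤ (X - m) ^ 2`. Markov's inequality for `(X - m) ^ 2`, whose mean
is `1 + m ^ 2`, gives `P(X ∉ (-a, b)) ≤ (1 + m ^ 2) / r ^ 2 = (4 + (a - b) ^ 2) / (a + b) ^ 2`.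
-/

lemma Real.notMem_Ioo_iff_sq_le {a b x : ℝ} (hab : a ≤ b) :
    x ∉ Set.Ioo a b ↔ ((b - a) / 2) ^ 2 ≤ (x - (a + b) / 2) ^ 2 := by
  rw [Real.Ioo_eq_ball, Metric.mem_ball, not_lt, Real.dist_eq, sq_le_sq,
    abs_of_nonneg (by linarith : 0 ≤ (b - a) / 2)]

section

variable {Ω : Type*} [MeasurableSpace Ω] {μ : Measure Ω} {X : Ω → ℝ}

lemma integrable_sub_const_sq [IsFiniteMeasure μ] (hX : Integrable X μ)
    (hX2 : Integrable (fun ω => X ω ^ 2) μ) (m : ℝ) : Integrable (fun ω => (X ω - m) ^ 2) μ := by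
  simp only [sub_sq]
  exact (hX2.sub ((hX.const_mul 2).mul_const m)).add (integrable_const _)

lemma integral_sub_const_sq [IsProbabilityMeasure μ] (hX : Integrable X μ)
    (hX2 : Integrable (fun ω => X ω ^ 2) μ) (m : ℝ) :
    ∫ ω, (X ω - m) ^ 2 ∂μ = ∫ ω, X ω ^ 2 ∂μ - 2 * m * ∫ ω, X ω ∂μ + m ^ 2 := by
  have hlin : Integrable (fun ω => 2 * X ω * m) μ := (hX.const_mul 2).mul_const m
  have hquad : Integrable (fun ω => X ω ^ 2 - 2 * X ω * m) μ := hX2.sub hlin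
  simp only [sub_sq]
  rw [integral_add hquad (integrable_const _), integral_sub hX2 hlin, integral_mul_const,
    integral_const_mul, integral_const, probReal_univ, one_smul]
  ring

lemma measureReal_notMem_Ioo_le {a b : ℝ} (hab : a < b)
    (hX2 : Integrable (fun ω => (X ω - (a + b) / 2) ^ 2) μ) :
    μ.real {ω | X ω ∉ Set.Ioo a b} ≤ (∫ ω, (X ω - (a + b) / 2) ^ 2 ∂μ) / ((b - a) / 2) ^ 2 := by
  have hr : 0 < ((b - a) / 2) ^ 2 := by have : 0 < b - a := sub_pos.2 hab; positivity
  have markov := mul_meas_ge_le_integral_of_nonneg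
    (Filter.Eventually.of_forall fun ω => sq_nonneg (X ω - (a + b) / 2)) hX2 (((b - a) / 2) ^ 2)
  simp only [← Real.notMem_Ioo_iff_sq_le hab.le] at markov
  rwa [le_div_iff₀ hr, mul_comm]

end

theorem always_bound_general (Ω : Type*) [MeasureSpace Ω]
    (hP : IsProbabilityMeasure (ℙ : Measure Ω))
    (X : Ω → ℝ)
    (hint1 : Integrable X) (hint2 : Integrable (fun ω => X ω ^ 2))
    (hmean : ∫ ω, X ω = 0) (hvar : ∫ ω, X ω ^ 2 = 1)
    (a b : ℝ) (hb : 0 < b) (hba : b ≤ a) :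
    ℙ {ω | X ω ∉ Set.Ioo (-a) b} ≤
      ENNReal.ofReal (min 1 ((4 + (a - b) ^ 2) / (a + b) ^ 2)) := by
  have hab : -a < b := by linarith
  have markov := measureReal_notMem_Ioo_le hab (integrable_sub_const_sq hint1 hint2 _)
  rw [integral_sub_const_sq hint1 hint2, hmean, hvar, mul_zero, sub_zero] at markov
  have hbound : (1 + ((-a + b) / 2) ^ 2) / ((b - -a) / 2) ^ 2
      = (4 + (a - b) ^ 2) / (a + b) ^ 2 := by
    rw [div_eq_div_iff (pow_pos (by linarith) 2).ne' (pow_pos (by linarith) 2).ne']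
    ring
  rw [hbound] at markov
  rw [ENNReal.ofReal_min, ENNReal.ofReal_one, ← ofReal_measureReal]
  exact le_min (ENNReal.ofReal_le_one.2 measureReal_le_one) (ENNReal.ofReal_le_ofReal markov)

theorem always_bound (Ω : Type*) [MeasureSpace Ω]
    (hP : IsProbabilityMeasure (ℙ : Measure Ω))
    (X : Ω → ℝ) (hX : Measurable X)
    (hint1 : Integrable X) (hint2 : Integrable (fun ω => X ω ^ 2))
    (hmean : ∫ ω, X ω = 0) (hvar : ∫ ω, X ω ^ 2 = 1)
    (a b : ℝ) (hb : 0 < b) (hba : b ≤ a) :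
    ℙ {ω | X ω ∉ Set.Ioo (-a) b} ≤
      ENNReal.ofReal (min 1 ((4 + (a - b) ^ 2) / (a + b) ^ 2)) :=
  always_bound_general Ω hP X hint1 hint2 hmean hvar a b hb hba
end

section
/- For reals 0 < b ≤ a with (a-b)b/2 ≥ 1, the indicator function g of ℝ \ (-a, b) satisfies g(x) ≤ ((bx+1)/(b²+1))² for all real x. -/
/-! Off the interval `(-a, b)` the affine function `b x + 1` has absolute value at least `b² + 1`:
for `x ≥ b` it is at least `b² + 1`, and for `x ≤ -a` it is at most `1 - ab ≤ -(b² + 1)` because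
`(a - b) b ≥ 2`. Hence the square of `(b x + 1) / (b² + 1)` is at least `1` there. -/

lemma sq_add_one_le_abs_mul_add_one {a b x : ℝ} (hb : 0 < b) (hab : 2 ≤ (a - b) * b)
    (hx : x ∉ Set.Ioo (-a) b) : b ^ 2 + 1 ≤ |b * x + 1| := by
  rcases le_or_gt x (-a) with hxa | hxa
  · have hbx : b * x ≤ -a * b := by nlinarith
    rw [abs_of_neg (by nlinarith)]
    nlinarith
  · have hbx : b ≤ x := not_lt.mp fun hxb => hx ⟨hxa, hxb⟩
    rw [abs_of_pos (by nlinarith)]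
    nlinarith

lemma one_le_sq_div_of_le_abs {c d : ℝ} (hd : 0 < d) (hcd : d ≤ |c|) : 1 ≤ (c / d) ^ 2 := by
  rw [one_le_sq_iff_one_le_abs, abs_div, abs_of_pos hd, one_le_div hd]
  exact hcd

theorem indicator_le_cantelli_quadratic_general (a b : ℝ) (hb : 0 < b)
    (h : 1 ≤ (a - b) * b / 2) (x : ℝ) :
    Set.indicator (Set.Ioo (-a) b)ᶜ (fun _ => (1 : ℝ)) x ≤
      ((b * x + 1) / (b ^ 2 + 1)) ^ 2 :=
  Set.indicator_apply_le'
    (fun hx => one_le_sq_div_of_le_abs (by positivity)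
      (sq_add_one_le_abs_mul_add_one hb (by linarith) hx))
    (fun _ => sq_nonneg _)

theorem indicator_le_cantelli_quadratic (a b : ℝ) (hb : 0 < b) (hba : b ≤ a)
    (h : 1 ≤ (a - b) * b / 2) (x : ℝ) :
    Set.indicator (Set.Ioo (-a) b)ᶜ (fun _ => (1 : ℝ)) x ≤
      ((b * x + 1) / (b ^ 2 + 1)) ^ 2 :=
  indicator_le_cantelli_quadratic_general a b hb h x
end

section
/- For reals 0 < b ≤ a with (a-b)b/2 ≤ 1 ≤ ab, the three-point distribution assigning probabilities (2-(a-b)b)/(a+b)², 4(ab-1)/(a+b)², and (2+(a-b)a)/(a+b)² to the points -a, (b-a)/2, and b respectively is a valid probability measure with mean 0 and second moment 1, and it assigns probability (4+(a-b)²)/(a+b)² to the set ℝ \ (-a, b). -/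
open MeasureTheory ProbabilityTheory
open scoped ProbabilityTheory

section WeightedDirac

variable {α : Type*} [MeasurableSpace α] [MeasurableSingletonClass α]

lemma integrable_ofReal_smul_dirac (p : ℝ) (x : α) (f : α → ℝ) :
    Integrable f (ENNReal.ofReal p • Measure.dirac x) :=
  (integrable_dirac (by simp)).smul_measure ENNReal.ofReal_ne_top

lemma integral_ofReal_smul_dirac {p : ℝ} (hp : 0 ≤ p) (x : α) (f : α → ℝ) :
    ∫ t, f t ∂(ENNReal.ofReal p • Measure.dirac x) = p * f x := by
  rw [integral_smul_measure, integral_dirac, ENNReal.toReal_ofReal hp, smul_eq_mul]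

lemma ofReal_smul_dirac_apply (p : ℝ) (x : α) (s : Set α) :
    (ENNReal.ofReal p • Measure.dirac x) s = ENNReal.ofReal (s.indicator (fun _ ↦ p) x) := by
  by_cases hx : x ∈ s <;> simp [Measure.dirac_apply, hx]

variable {p q r : ℝ} (hp : 0 ≤ p) (hq : 0 ≤ q) (hr : 0 ≤ r) (x y z : α)
include hp hq hr

lemma integral_three_point (f : α → ℝ) :
    ∫ t, f t ∂(ENNReal.ofReal p • Measure.dirac x + ENNReal.ofReal q • Measure.dirac y
        + ENNReal.ofReal r • Measure.dirac z) = p * f x + q * f y + r * f z := by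
  rw [integral_add_measure ((integrable_ofReal_smul_dirac p x f).add_measure
      (integrable_ofReal_smul_dirac q y f)) (integrable_ofReal_smul_dirac r z f),
    integral_add_measure (integrable_ofReal_smul_dirac p x f) (integrable_ofReal_smul_dirac q y f),
    integral_ofReal_smul_dirac hp, integral_ofReal_smul_dirac hq, integral_ofReal_smul_dirac hr]

lemma three_point_apply (s : Set α) :
    (ENNReal.ofReal p • Measure.dirac x + ENNReal.ofReal q • Measure.dirac y
        + ENNReal.ofReal r • Measure.dirac z) s
      = ENNReal.ofReal (s.indicator (fun _ ↦ p) x + s.indicator (fun _ ↦ q) y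
          + s.indicator (fun _ ↦ r) z) := by
  have hp' := s.indicator_nonneg (fun _ _ ↦ hp) x
  have hq' := s.indicator_nonneg (fun _ _ ↦ hq) y
  have hr' := s.indicator_nonneg (fun _ _ ↦ hr) z
  simp only [Measure.add_apply, ofReal_smul_dirac_apply]
  rw [ENNReal.ofReal_add (add_nonneg hp' hq') hr', ENNReal.ofReal_add hp' hq']

lemma isProbabilityMeasure_three_point (hsum : p + q + r = 1) :
    IsProbabilityMeasure (ENNReal.ofReal p • Measure.dirac x + ENNReal.ofReal q • Measure.dirac y
        + ENNReal.ofReal r • Measure.dirac z) :=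
  ⟨by simp only [three_point_apply hp hq hr, Set.indicator_univ, hsum, ENNReal.ofReal_one]⟩

end WeightedDirac

theorem middle_case_exact (a b : ℝ) (hb : 0 < b) (hba : b ≤ a)
    (h1 : (a - b) * b / 2 ≤ 1) (h2 : 1 ≤ a * b) :
    let μ : Measure ℝ :=
      ENNReal.ofReal ((2 - (a - b) * b) / (a + b) ^ 2) • Measure.dirac (-a)
        + ENNReal.ofReal (4 * (a * b - 1) / (a + b) ^ 2) • Measure.dirac ((b - a) / 2)
        + ENNReal.ofReal ((2 + (a - b) * a) / (a + b) ^ 2) • Measure.dirac b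
    IsProbabilityMeasure μ ∧ (∫ x, x ∂μ) = 0 ∧ (∫ x, x ^ 2 ∂μ) = 1 ∧
      μ {x | x ∉ Set.Ioo (-a) b} = ENNReal.ofReal ((4 + (a - b) ^ 2) / (a + b) ^ 2) := by
  intro μ
  have hab : 0 < a + b := by linarith
  have hp : 0 ≤ (2 - (a - b) * b) / (a + b) ^ 2 := div_nonneg (by linarith) (by positivity)
  have hq : 0 ≤ 4 * (a * b - 1) / (a + b) ^ 2 := div_nonneg (by linarith) (by positivity)
  have hr : 0 ≤ (2 + (a - b) * a) / (a + b) ^ 2 := div_nonneg (by nlinarith) (by positivity)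
  refine ⟨isProbabilityMeasure_three_point hp hq hr _ _ _ (by field_simp; ring), ?_, ?_, ?_⟩
  · rw [integral_three_point hp hq hr]
    field_simp
    ring
  · rw [integral_three_point hp hq hr]
    field_simp
    ring
  · have hmid : (b - a) / 2 ∈ Set.Ioo (-a) b := ⟨by linarith, by linarith⟩
    rw [three_point_apply hp hq hr, Set.indicator_of_mem (by simp), Set.indicator_of_notMem (by simpa),
      Set.indicator_of_mem (by simp), add_zero]
    congr 1
    field_simp
    ring
end

section
/- For reals 0 < b ≤ a with ab ≤ 1, the two-point distribution assigning probabilities b/(a+b) and a/(a+b) to the points -√(a/b) and √(b/a) respectively has mean 0 and second moment 1, and since ab ≤ 1 we have √(b/a) ≥ b and √(a/b) ≥ a, so both support points lie outside (-a, b); hence the distribution assigns probability 1 to ℝ \ (-a, b). -/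
open MeasureTheory ProbabilityTheory
open scoped ProbabilityTheory

lemma my_integrable_dirac {f : ℝ → ℝ} (hf : Measurable f) (p : ℝ) :
    Integrable f (Measure.dirac p) := by
  refine ⟨hf.aestronglyMeasurable, ?_⟩
  rw [HasFiniteIntegral, MeasureTheory.lintegral_dirac]
  exact ENNReal.coe_lt_top

theorem first_case_exact (a b : ℝ) (hb : 0 < b) (hba : b ≤ a) (hab : a * b ≤ 1) :
    let μ : Measure ℝ :=
      ENNReal.ofReal (b / (a + b)) • Measure.dirac (-Real.sqrt (a / b))
        + ENNReal.ofReal (a / (a + b)) • Measure.dirac (Real.sqrt (b / a))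
    IsProbabilityMeasure μ ∧ (∫ x, x ∂μ) = 0 ∧ (∫ x, x ^ 2 ∂μ) = 1 ∧
      b ≤ Real.sqrt (b / a) ∧ a ≤ Real.sqrt (a / b) ∧
      μ {x | x ∉ Set.Ioo (-a) b} = 1 := by
  intro μ
  have ha : 0 < a := hb.trans_le hba
  have hs : 0 < a + b := by linarith
  have hbs : 0 ≤ b / (a + b) := by positivity
  have has : 0 ≤ a / (a + b) := by positivity
  have hsum : b / (a + b) + a / (a + b) = 1 := by field_simp; ring
  have hsq1 : Real.sqrt (a / b) ^ 2 = a / b := Real.sq_sqrt (by positivity)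
  have hsq2 : Real.sqrt (b / a) ^ 2 = b / a := Real.sq_sqrt (by positivity)
  have hbt : b ≤ Real.sqrt (b / a) := by
    rw [Real.le_sqrt hb.le (by positivity), div_eq_mul_inv]
    rw [← mul_le_mul_iff_left₀ ha]
    have : a⁻¹ * a = 1 := inv_mul_cancel₀ ha.ne'
    nlinarith
  have hat : a ≤ Real.sqrt (a / b) := by
    rw [Real.le_sqrt ha.le (by positivity), div_eq_mul_inv]
    rw [← mul_le_mul_iff_left₀ hb]
    have : b⁻¹ * b = 1 := inv_mul_cancel₀ hb.ne'
    nlinarith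
  have h1 : b * Real.sqrt (a / b) = Real.sqrt (a * b) := by
    rw [show b = Real.sqrt (b ^ 2) from (Real.sqrt_sq hb.le).symm,
      ← Real.sqrt_mul (by positivity)]
    congr 1
    field_simp
    simp [Real.sq_sqrt, sq_nonneg]
  have h2 : a * Real.sqrt (b / a) = Real.sqrt (a * b) := by
    rw [show a = Real.sqrt (a ^ 2) from (Real.sqrt_sq ha.le).symm,
      ← Real.sqrt_mul (by positivity)]
    congr 1
    field_simp
    simp [Real.sq_sqrt, sq_nonneg]
  have hprob : IsProbabilityMeasure μ := by
    constructor
    simp only [μ, Measure.add_apply, Measure.smul_apply, Measure.dirac_apply_of_mem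
      (Set.mem_univ _), smul_eq_mul, mul_one]
    rw [← ENNReal.ofReal_add hbs has, hsum, ENNReal.ofReal_one]
  have hint : ∀ (f : ℝ → ℝ), Measurable f → (∫ x, f x ∂μ) =
      (b / (a + b)) * f (-Real.sqrt (a / b)) + (a / (a + b)) * f (Real.sqrt (b / a)) := by
    intro f hf
    rw [show μ = _ + _ from rfl, integral_add_measure
      ((my_integrable_dirac hf _).smul_measure ENNReal.ofReal_ne_top)
      ((my_integrable_dirac hf _).smul_measure ENNReal.ofReal_ne_top),
      integral_smul_measure, integral_smul_measure, integral_dirac, integral_dirac,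
      ENNReal.toReal_ofReal hbs, ENNReal.toReal_ofReal has, smul_eq_mul, smul_eq_mul]
  refine ⟨hprob, ?_, ?_, hbt, hat, ?_⟩
  · rw [hint (fun x => x) measurable_id]
    rw [div_mul_eq_mul_div, div_mul_eq_mul_div, ← add_div, div_eq_zero_iff]
    left
    linear_combination h2 - h1
  · rw [hint (fun x => x ^ 2) (by measurability)]
    simp only [neg_pow, hsq1, hsq2, Even.neg_pow (by norm_num : Even 2)]
    field_simp
  · have hmS : MeasurableSet {x : ℝ | x ∉ Set.Ioo (-a) b} :=
      measurableSet_Ioo.compl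
    have hm1 : -Real.sqrt (a / b) ∈ {x : ℝ | x ∉ Set.Ioo (-a) b} := by
      simp only [Set.mem_setOf_eq, Set.mem_Ioo, not_and, not_lt]
      intro h
      linarith
    have hm2 : Real.sqrt (b / a) ∈ {x : ℝ | x ∉ Set.Ioo (-a) b} := by
      simp only [Set.mem_setOf_eq, Set.mem_Ioo, not_and, not_lt]
      intro h
      exact hbt
    simp only [μ, Measure.add_apply, Measure.smul_apply, smul_eq_mul,
      Measure.dirac_apply_of_mem hm1, Measure.dirac_apply_of_mem hm2, mul_one]
    rw [← ENNReal.ofReal_add hbs has, hsum, ENNReal.ofReal_one]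
end

section
/- For fixed b > 0, the function a ↦ P_{a,b} is nonincreasing in a on [b, ∞), where P_{a,b} = 1 if ab ≤ 1, P_{a,b} = (4+(a-b)²)/(a+b)² if (a-b)b/2 ≤ 1 ≤ ab, and P_{a,b} = 1/(1+b²) if (a-b)b/2 ≥ 1. -/
/-!
In the middle regime, with `t = 1 / (a + b)`, the value of `P_{a,b}` is the quadratic
`1 - 4 b t + 4 (1 + b²) t²`. It is at most `1` exactly when `a b ≥ 1`, it never drops below its
minimum `1 / (1 + b²)`, and that minimum is attained at `a = b + 2 / b`; up to there `t` lies on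
the increasing side of the parabola, so the value decreases in `a`. Hence the three pieces fit
together into a nonincreasing function of `a`.
-/

open MeasureTheory ProbabilityTheory
open scoped ProbabilityTheory

noncomputable def Pab (a b : ℝ) : ℝ :=
  if a * b ≤ 1 then 1
  else if (a - b) * b / 2 ≤ 1 then (4 + (a - b) ^ 2) / (a + b) ^ 2
  else 1 / (1 + b ^ 2)

lemma sq_add_pos_of_one_lt_mul {a b : ℝ} (h : 1 < a * b) : 0 < (a + b) ^ 2 := by
  nlinarith [sq_nonneg (a - b)]

lemma Pab_middle_le_one {a b : ℝ} (h : 1 < a * b) : (4 + (a - b) ^ 2) / (a + b) ^ 2 ≤ 1 := by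
  rw [div_le_one (sq_add_pos_of_one_lt_mul h)]
  nlinarith

lemma one_div_one_add_sq_le_Pab_middle {a b : ℝ} (h : 1 < a * b) :
    1 / (1 + b ^ 2) ≤ (4 + (a - b) ^ 2) / (a + b) ^ 2 := by
  rw [div_le_div_iff₀ (by positivity) (sq_add_pos_of_one_lt_mul h)]
  linear_combination sq_nonneg ((a - b) * b - 2)

lemma Pab_middle_antitone {a₁ a₂ b : ℝ} (h₁ : 0 < a₁ + b) (h : a₁ ≤ a₂)
    (h₂ : (a₂ - b) * b ≤ 2) :
    (4 + (a₂ - b) ^ 2) / (a₂ + b) ^ 2 ≤ (4 + (a₁ - b) ^ 2) / (a₁ + b) ^ 2 := by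
  rw [div_le_div_iff₀ (by nlinarith) (by positivity)]
  have key : b * (a₁ + b) * (a₂ + b) ≤ (1 + b ^ 2) * ((a₁ + b) + (a₂ + b)) := by nlinarith
  linear_combination 4 * mul_nonneg (sub_nonneg.2 h) (sub_nonneg.2 key)

lemma Pab_le_one (a b : ℝ) : Pab a b ≤ 1 := by
  unfold Pab
  split_ifs with h₁ h₂
  · rfl
  · exact Pab_middle_le_one (not_le.1 h₁)
  · exact div_le_one_of_le₀ (by nlinarith) (by positivity)

lemma one_div_one_add_sq_le_Pab (a b : ℝ) : 1 / (1 + b ^ 2) ≤ Pab a b := by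
  unfold Pab
  split_ifs with h₁ h₂
  · exact div_le_one_of_le₀ (by nlinarith) (by positivity)
  · exact one_div_one_add_sq_le_Pab_middle (not_le.1 h₁)
  · rfl

lemma antitone_Pab {b : ℝ} (hb : 0 < b) : Antitone (Pab · b) := by
  intro a₁ a₂ h
  by_cases h₁ : a₁ * b ≤ 1
  · simpa [Pab, h₁] using Pab_le_one a₂ b
  have h₂ : ¬ a₂ * b ≤ 1 := fun h₂ => h₁ (by nlinarith)
  by_cases hmid : (a₂ - b) * b / 2 ≤ 1
  · have hmid₁ : (a₁ - b) * b / 2 ≤ 1 := by nlinarith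
    simp only [Pab, h₁, h₂, hmid, hmid₁, if_false, if_true]
    exact Pab_middle_antitone (by nlinarith) h (by linarith)
  · simpa [Pab, h₂, hmid] using one_div_one_add_sq_le_Pab a₁ b

theorem Pab_antitone (b : ℝ) (hb : 0 < b) :
    ∀ a₁ a₂ : ℝ, b ≤ a₁ → a₁ ≤ a₂ → Pab a₂ b ≤ Pab a₁ b :=
  fun _ _ _ h => antitone_Pab hb h
end
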